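/- arXiv:2310.00466 — 3 statements merged into one kernel-verified Lean document; each statement's English description precedes it below -/
import Mathlib

section
/- Under the same hypotheses, the degree-4 operator L: B^{4i} → B^{4i+4} (multiplication by the Euler class) satisfies the transverse Hard Lefschetz property: L^{n-k}: B^{2k} → B^{4n-2k} is an isomorphism for every k = 0, 1, …, n. -/
/-- under the Gysin-sequence hypotheses for a homotopy
`(4n+3)`-sphere, multiplication by the Euler class satisfies the transverse
Hard Lefschetz property: `L^(n-k) : B^{2k} → B^{4n-2k}` is an isomorphism for
every `k = 0, …, n`. -/
theorem stmt2 (n : ℕ) (VB VH : Type) [AddCommGroup VB] [Module ℝ VB]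
    [AddCommGroup VH] [Module ℝ VH]
    (B : ℤ → Submodule ℝ VB) (Hgr : ℤ → Submodule ℝ VH)
    (ι : VB →ₗ[ℝ] VH) (ρ : VH →ₗ[ℝ] VB) (L : Module.End ℝ VB)
    (hι : ∀ k : ℤ, ∀ x ∈ B k, ι x ∈ Hgr k)
    (hρ : ∀ k : ℤ, ∀ y ∈ Hgr k, ρ y ∈ B (k - 3))
    (hL : ∀ k : ℤ, ∀ x ∈ B k, L x ∈ B (k + 4))
    (hexH : ∀ k : ℤ, ∀ y ∈ Hgr k, (ρ y = 0 ↔ ∃ x ∈ B k, ι x = y))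
    (hexB1 : ∀ k : ℤ, ∀ x ∈ B (k - 3), (L x = 0 ↔ ∃ y ∈ Hgr k, ρ y = x))
    (hexB2 : ∀ k : ℤ, ∀ x ∈ B (k + 1), (ι x = 0 ↔ ∃ y ∈ B (k - 3), L y = x))
    (hH1 : Module.finrank ℝ ↥(Hgr 0) = 1)
    (hH2 : Module.finrank ℝ ↥(Hgr (4 * n + 3)) = 1)
    (hH0 : ∀ i : ℤ, i ≠ 0 → i ≠ 4 * n + 3 → Hgr i = ⊥)
    (hB0 : Module.finrank ℝ ↥(B 0) = 1)
    (hBhigh : ∀ i : ℤ, 4 * n < i → B i = ⊥)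
    (hBneg : ∀ i : ℤ, i < 0 → B i = ⊥) :
    ∀ k : ℕ, k ≤ n →
      Set.BijOn ⇑(L ^ (n - k)) (B (2 * k) : Set VB)
        (B (4 * n - 2 * k) : Set VB) := by
  -- Single-step bijectivity: L : B j → B (j+4) is a bijection for 0 ≤ j, j+4 ≤ 4n.
  have step : ∀ j : ℤ, 0 ≤ j → j + 4 ≤ 4 * n →
      Set.BijOn ⇑L (B j : Set VB) (B (j + 4) : Set VB) := by
    intro j hj0 hj4
    have h3 : Hgr (j + 3) = ⊥ := hH0 _ (by omega) (by omega)
    have h4 : Hgr (j + 4) = ⊥ := hH0 _ (by omega) (by omega)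
    refine ⟨fun x hx => hL j x hx, ?_, ?_⟩
    · intro x hx y hy hxy
      have hmem : x - y ∈ B ((j + 3) - 3) := by
        simpa using (B j).sub_mem hx hy
      obtain ⟨z, hz, hzx⟩ :=
        (hexB1 (j + 3) (x - y) hmem).mp (by simp [map_sub, hxy])
      rw [h3, Submodule.mem_bot] at hz
      have hxy0 : x - y = 0 := by rw [← hzx, hz, map_zero]
      exact sub_eq_zero.mp hxy0
    · intro z hz
      have hz' : z ∈ B ((j + 3) + 1) := by rwa [show j + 3 + 1 = j + 4 by ring]
      have hιz : ι z = 0 := by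
        have := hι (j + 4) z hz
        rwa [h4, Submodule.mem_bot] at this
      obtain ⟨y, hy, hLy⟩ := (hexB2 (j + 3) z hz').mp hιz
      exact ⟨y, by simpa using hy, hLy⟩
  -- Iterate.
  have aux : ∀ m : ℕ, ∀ j : ℤ, 0 ≤ j → j + 4 * m ≤ 4 * n →
      Set.BijOn ⇑(L ^ m) (B j : Set VB) (B (j + 4 * m) : Set VB) := by
    intro m
    induction m with
    | zero =>
      intro j hj0 _
      simp only [pow_zero, Nat.cast_zero, mul_zero, add_zero]
      exact ⟨fun x hx => by simpa using hx,
        fun x _ y _ h => by simpa using h,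
        fun x hx => ⟨x, hx, rfl⟩⟩
    | succ m ih =>
      intro j hj0 hj
      have hm : (((m : ℕ) + 1 : ℕ) : ℤ) = (m : ℤ) + 1 := by push_cast; ring
      rw [hm] at hj
      have h1 : Set.BijOn ⇑L (B j : Set VB) (B (j + 4) : Set VB) :=
        step j hj0 (by omega)
      have h2 := ih (j + 4) (by omega) (by omega)
      have hfun : ⇑(L ^ (m + 1)) = ⇑(L ^ m) ∘ ⇑L := by
        ext x; simp [pow_succ, Module.End.mul_apply]
      have hcomp := h2.comp h1
      have heq : j + 4 + 4 * (m : ℤ) = j + 4 * (((m + 1 : ℕ) : ℤ)) := by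
        push_cast; ring
      rw [hfun]
      rw [heq] at hcomp
      exact hcomp
  intro k hk
  have e : (2 * (k : ℤ)) + 4 * ((n - k : ℕ) : ℤ) = 4 * (n : ℤ) - 2 * (k : ℤ) := by
    push_cast [Nat.cast_sub hk]; ring
  have h := aux (n - k) (2 * k) (by positivity)
    (by rw [e]; omega)
  rwa [e] at h
end

section
/- With the structure equations dχ_1 = e_1 − χ_2∧χ_3, dχ_2 = e_2 + χ_1∧χ_3, dχ_3 = e_3 − χ_1∧χ_2, one has dχ_1 ∧ dχ_1 = (e_1² + e_2² + e_3²) − d(e_2∧χ_2 + e_3∧χ_3). -/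
private lemma aux_self_neg {A : Type} [AddCommGroup A] [Module ℝ A] (x : A)
    (h : x = -x) : x = 0 := by
  have h2 : (2:ℝ) • x = 0 := by
    rw [two_smul]
    nth_rewrite 2 [h]
    simp
  have : ((2:ℝ)⁻¹ * 2) • x = 0 := by rw [mul_smul, h2, smul_zero]
  simpa using this

/-- `dχ₁ ∧ dχ₁ = (e₁² + e₂² + e₃²) − d(e₂∧χ₂ + e₃∧χ₃)`. -/
theorem stmt7 (A : Type) [Ring A] [Algebra ℝ A] (d : A →ₗ[ℝ] A)
    (G : ℕ → Submodule ℝ A)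
    -- graded algebra structure
    (hmul : ∀ i j : ℕ, ∀ x ∈ G i, ∀ y ∈ G j, x * y ∈ G (i + j))
    -- graded commutativity
    (hcomm : ∀ i j : ℕ, ∀ x ∈ G i, ∀ y ∈ G j,
      x * y = ((-1 : ℝ) ^ (i * j)) • (y * x))
    -- d is a degree-1 derivation with d² = 0
    (hdeg : ∀ i : ℕ, ∀ x ∈ G i, d x ∈ G (i + 1))
    (hLeib : ∀ i : ℕ, ∀ x ∈ G i, ∀ y : A,
      d (x * y) = d x * y + ((-1 : ℝ) ^ i) • (x * d y))
    (hd2 : ∀ x : A, d (d x) = 0)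
    -- the characteristic 1-forms and horizontal 2-forms
    (χ1 χ2 χ3 e1 e2 e3 : A)
    (hχ1 : χ1 ∈ G 1) (hχ2 : χ2 ∈ G 1) (hχ3 : χ3 ∈ G 1)
    (he1 : e1 ∈ G 2) (he2 : e2 ∈ G 2) (he3 : e3 ∈ G 2)
    -- the structure equations
    (h1 : d χ1 = e1 - χ2 * χ3)
    (h2 : d χ2 = e2 + χ1 * χ3)
    (h3 : d χ3 = e3 - χ1 * χ2) :
    d χ1 * d χ1 = (e1 * e1 + e2 * e2 + e3 * e3) - d (e2 * χ2 + e3 * χ3) := by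
  -- basic (anti)commutation facts
  have hanti : ∀ x ∈ G 1, ∀ y ∈ G 1, x * y = -(y * x) := by
    intro x hx y hy
    have := hcomm 1 1 x hx y hy
    simpa using this
  have hsq : ∀ x ∈ G 1, x * x = 0 := by
    intro x hx
    exact aux_self_neg _ (hanti x hx x hx)
  have hc12 : ∀ x ∈ G 1, ∀ y ∈ G 2, x * y = y * x := by
    intro x hx y hy
    have := hcomm 1 2 x hx y hy
    simpa using this
  have h11 := hsq χ1 hχ1
  have h22 := hsq χ2 hχ2
  have h33 := hsq χ3 hχ3
  have h32 : χ3 * χ2 = -(χ2 * χ3) := hanti χ3 hχ3 χ2 hχ2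
  -- d e2 and d e3
  have hde2 : d e2 = e3 * χ1 - e1 * χ3 := by
    have h0 := hd2 χ2
    rw [h2, map_add, hLeib 1 χ1 hχ1 χ3, h1, h3] at h0
    have k1 : (e1 - χ2 * χ3) * χ3 = e1 * χ3 := by
      rw [sub_mul, mul_assoc, h33, mul_zero, sub_zero]
    have k2 : χ1 * (e3 - χ1 * χ2) = e3 * χ1 := by
      rw [mul_sub, ← mul_assoc, h11, zero_mul, sub_zero, hc12 χ1 hχ1 e3 he3]
    rw [k1, k2] at h0
    have := eq_neg_of_add_eq_zero_left h0
    rw [this]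
    simp
    abel
  have hde3 : d e3 = e1 * χ2 - e2 * χ1 := by
    have h0 := hd2 χ3
    rw [h3, map_sub, hLeib 1 χ1 hχ1 χ2, h1, h2] at h0
    have k1 : (e1 - χ2 * χ3) * χ2 = e1 * χ2 := by
      rw [sub_mul, mul_assoc, h32, mul_neg, ← mul_assoc, h22, zero_mul, neg_zero, sub_zero]
    have k2 : χ1 * (e2 + χ1 * χ3) = e2 * χ1 := by
      rw [mul_add, ← mul_assoc, h11, zero_mul, add_zero, hc12 χ1 hχ1 e2 he2]
    rw [k1, k2] at h0
    have := sub_eq_zero.mp h0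
    rw [this]
    simp
    abel
  -- main pieces
  have hx2 : χ2 * χ3 ∈ G 2 := hmul 1 1 χ2 hχ2 χ3 hχ3
  have hxe : (χ2 * χ3) * e1 = e1 * (χ2 * χ3) := by
    have := hcomm 2 2 (χ2 * χ3) hx2 e1 he1
    norm_num at this
    exact this
  have hxx : (χ2 * χ3) * (χ2 * χ3) = 0 := by
    calc (χ2 * χ3) * (χ2 * χ3) = χ2 * (χ3 * χ2) * χ3 := by noncomm_ring
      _ = χ2 * (-(χ2 * χ3)) * χ3 := by rw [h32]
      _ = -((χ2 * χ2) * (χ3 * χ3)) := by noncomm_ring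
      _ = 0 := by rw [h22, zero_mul, neg_zero]
  have hA : (e1 - χ2 * χ3) * (e1 - χ2 * χ3)
      = e1 * e1 - e1 * (χ2 * χ3) - e1 * (χ2 * χ3) := by
    rw [mul_sub, sub_mul, sub_mul, hxe, hxx]
    abel
  have hB : d (e2 * χ2)
      = e3 * (χ1 * χ2) + e1 * (χ2 * χ3) + e2 * e2 + e2 * (χ1 * χ3) := by
    rw [hLeib 2 e2 he2 χ2, hde2, h2]
    have k1 : (e3 * χ1 - e1 * χ3) * χ2
        = e3 * (χ1 * χ2) + e1 * (χ2 * χ3) := by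
      rw [sub_mul, mul_assoc, mul_assoc, h32, mul_neg, sub_neg_eq_add]
    rw [k1]
    simp only [neg_one_sq, one_smul, mul_add]
    abel
  have hC : d (e3 * χ3)
      = e1 * (χ2 * χ3) - e2 * (χ1 * χ3) + e3 * e3 - e3 * (χ1 * χ2) := by
    rw [hLeib 2 e3 he3 χ3, hde3, h3]
    have k1 : (e1 * χ2 - e2 * χ1) * χ3
        = e1 * (χ2 * χ3) - e2 * (χ1 * χ3) := by
      rw [sub_mul, mul_assoc, mul_assoc]
    rw [k1]
    simp only [neg_one_sq, one_smul, mul_sub]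
    abel
  rw [h1, map_add, hA, hB, hC]
  abel
end

section
/- Let ... → B^k →^ι H^k →^ρ B^{k-3} →^L B^{k+1} → ... be a long exact sequence of finite-dimensional real vector spaces with L of degree 4. Suppose L: B^{2k-3} → B^{2k+1} is injective and L^{n-k+2}: B^{2k-4} → B^{4n-2k+4} is an isomorphism. Let P^{2k} = ker(L^{n-k+1}: B^{2k} → B^{4n-2k+4}). Then ι restricted to P^{2k} is an isomorphism onto H^{2k}, and B^{2k} = P^{2k} ⊕ L(B^{2k-4}). -/
/-- Proposition `prop:pk`: in the (graded) exact Gysin sequence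
`B^{2k-4} →L B^{2k} →ι H^{2k} →ρ B^{2k-3} →L B^{2k+1}`, if
`L : B^{2k-3} → B^{2k+1}` is injective and `L^(n-k+2) : B^{2k-4} → B^{4n-2k+4}`
is an isomorphism, then `ι` restricts to an isomorphism of
`P^{2k} = ker(L^(n-k+1) : B^{2k} → B^{4n-2k+4})` onto `H^{2k}`, and
`B^{2k} = P^{2k} ⊕ L(B^{2k-4})`. -/
theorem stmt13 (n k : ℕ) (hk2 : 2 ≤ k) (hkn : k ≤ n)
    (V W : Type) [AddCommGroup V] [Module ℝ V] [AddCommGroup W] [Module ℝ W]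
    [FiniteDimensional ℝ V] [FiniteDimensional ℝ W]
    (B : ℤ → Submodule ℝ V) (Hgr : ℤ → Submodule ℝ W)
    (ι : V →ₗ[ℝ] W) (ρ : W →ₗ[ℝ] V) (L : Module.End ℝ V)
    (hι : ∀ j : ℤ, ∀ x ∈ B j, ι x ∈ Hgr j)
    (hρ : ∀ j : ℤ, ∀ y ∈ Hgr j, ρ y ∈ B (j - 3))
    (hL : ∀ j : ℤ, ∀ x ∈ B j, L x ∈ B (j + 4))
    -- exactness at `B^{2k}`, `H^{2k}` and `B^{2k-3}`
    (hexB : ∀ x ∈ B (2 * k), (ι x = 0 ↔ ∃ y ∈ B (2 * k - 4), L y = x))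
    (hexH : ∀ y ∈ Hgr (2 * k), (ρ y = 0 ↔ ∃ x ∈ B (2 * k), ι x = y))
    (hexB' : ∀ x ∈ B (2 * k - 3), (L x = 0 ↔ ∃ y ∈ Hgr (2 * k), ρ y = x))
    -- injectivity of `L` in odd degree and THL_{k-2}
    (hinj : Set.InjOn ⇑L (B (2 * k - 3) : Set V))
    (hiso : Set.BijOn ⇑(L ^ (n - k + 2)) (B (2 * k - 4) : Set V)
      (B (4 * n - 2 * k + 4) : Set V)) :
    Set.BijOn ⇑ι ((B (2 * k) ⊓ LinearMap.ker (L ^ (n - k + 1)) : Submodule ℝ V) : Set V)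
      (Hgr (2 * k) : Set W) ∧
    (B (2 * k) ⊓ LinearMap.ker (L ^ (n - k + 1))) ⊓
        Submodule.map (L : V →ₗ[ℝ] V) (B (2 * k - 4)) = ⊥ ∧
    (B (2 * k) ⊓ LinearMap.ker (L ^ (n - k + 1))) ⊔
        Submodule.map (L : V →ₗ[ℝ] V) (B (2 * k - 4)) = B (2 * k) := by
  -- powers of L respect grading
  have hLpow : ∀ (m : ℕ) (j : ℤ), ∀ x ∈ B j, (L ^ m) x ∈ B (j + 4 * m) := by
    intro m
    induction m with
    | zero => intro j x hx; simpa using hx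
    | succ m ih =>
      intro j x hx
      have h2 := ih (j + 4) (L x) (hL j x hx)
      have e : (L ^ (m + 1)) x = (L ^ m) (L x) := by
        rw [pow_succ]; rfl
      rw [e]
      have e2 : (j : ℤ) + 4 * ((m : ℤ) + 1) = j + 4 + 4 * m := by ring
      push_cast
      rw [e2]
      exact h2
  have hL1 : ∀ x ∈ B (2 * (k : ℤ)), (L ^ (n - k + 1)) x ∈ B (4 * n - 2 * k + 4) := by
    intro x hx
    have h := hLpow (n - k + 1) (2 * k) x hx
    have e : (2 * (k : ℤ) + 4 * ((n - k + 1 : ℕ) : ℤ)) = 4 * n - 2 * k + 4 := by omega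
    rwa [e] at h
  -- the key relation L^(n-k+2) y = L^(n-k+1) (L y)
  have hcomp : ∀ y : V, (L ^ (n - k + 2)) y = (L ^ (n - k + 1)) (L y) := by
    intro y
    have : (n - k + 2) = (n - k + 1) + 1 := by omega
    rw [this, pow_succ]; rfl
  -- injectivity of L^(n-k+2) on B^{2k-4} at zero
  have hinj2 : ∀ y ∈ B (2 * (k : ℤ) - 4), (L ^ (n - k + 2)) y = 0 → y = 0 := by
    intro y hy h0
    have h02 : (L ^ (n - k + 2)) (0 : V) = 0 := map_zero _
    exact hiso.injOn hy (Submodule.zero_mem _) (by rw [h0, h02])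
  -- ι vanishes only at 0 on P
  have hP0 : ∀ x ∈ B (2 * (k : ℤ)), (L ^ (n - k + 1)) x = 0 → ι x = 0 → x = 0 := by
    intro x hx hker h0
    obtain ⟨y, hy, hyx⟩ := (hexB x hx).mp h0
    have : (L ^ (n - k + 2)) y = 0 := by rw [hcomp, hyx]; exact hker
    have hy0 := hinj2 y hy this
    rw [← hyx, hy0, map_zero]
  -- splitting: every x in B^{2k} differs from an element of L(B^{2k-4}) by an element of P
  have hsplit : ∀ x ∈ B (2 * (k : ℤ)), ∃ y ∈ B (2 * (k : ℤ) - 4),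
      (L ^ (n - k + 1)) (x - L y) = 0 := by
    intro x hx
    obtain ⟨y, hy, hyx⟩ := hiso.surjOn (hL1 x hx)
    refine ⟨y, hy, ?_⟩
    have := hcomp y
    rw [map_sub, ← this, hyx, sub_self]
  -- membership of L y in B^{2k}
  have hLmem : ∀ y ∈ B (2 * (k : ℤ) - 4), L y ∈ B (2 * (k : ℤ)) := by
    intro y hy
    have := hL (2 * k - 4) y hy
    have e : (2 * (k : ℤ) - 4 + 4) = 2 * k := by ring
    rwa [e] at this
  -- ι kills L(B^{2k-4})
  have hιL : ∀ y ∈ B (2 * (k : ℤ) - 4), ι (L y) = 0 := by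
    intro y hy
    exact (hexB (L y) (hLmem y hy)).mpr ⟨y, hy, rfl⟩
  refine ⟨⟨?_, ?_, ?_⟩, ?_, ?_⟩
  · -- MapsTo
    rintro x ⟨hx, -⟩
    exact hι (2 * k) x hx
  · -- InjOn
    rintro x1 ⟨hx1, hk1⟩ x2 ⟨hx2, hk2'⟩ h
    have hsub : x1 - x2 ∈ B (2 * (k : ℤ)) := Submodule.sub_mem _ hx1 hx2
    have hker : (L ^ (n - k + 1)) (x1 - x2) = 0 := by
      rw [map_sub, LinearMap.mem_ker.mp hk1, LinearMap.mem_ker.mp hk2', sub_self]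
    have h0 : ι (x1 - x2) = 0 := by rw [map_sub, h, sub_self]
    have := hP0 _ hsub hker h0
    exact sub_eq_zero.mp this
  · -- SurjOn
    intro w hw
    have hρw : ρ w ∈ B (2 * (k : ℤ) - 3) := hρ (2 * k) w hw
    have hLρw : L (ρ w) = 0 := (hexB' (ρ w) hρw).mpr ⟨w, hw, rfl⟩
    have hρ0 : ρ w = 0 := by
      have h0 : L (0 : V) = 0 := map_zero _
      exact hinj hρw (Submodule.zero_mem _) (by rw [hLρw, h0])
    obtain ⟨x, hx, hxw⟩ := (hexH w hw).mp hρ0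
    obtain ⟨y, hy, hy0⟩ := hsplit x hx
    refine ⟨x - L y, ⟨Submodule.sub_mem _ hx (hLmem y hy), LinearMap.mem_ker.mpr hy0⟩, ?_⟩
    rw [map_sub, hxw, hιL y hy, sub_zero]
  · -- trivial intersection
    rw [eq_bot_iff]
    rintro x ⟨⟨hx, hker⟩, y, hy, hyx⟩
    have : (L ^ (n - k + 2)) y = 0 := by
      rw [hcomp, hyx]; exact LinearMap.mem_ker.mp hker
    have hy0 := hinj2 y hy this
    have : x = 0 := by rw [← hyx, hy0, map_zero]
    simpa using this
  · -- sum
    apply le_antisymm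
    · refine sup_le (le_trans inf_le_left le_rfl) ?_
      rintro x ⟨y, hy, hyx⟩
      rw [← hyx]
      exact hLmem y hy
    · intro x hx
      obtain ⟨y, hy, hy0⟩ := hsplit x hx
      have h1 : x - L y ∈ B (2 * (k : ℤ)) ⊓ LinearMap.ker (L ^ (n - k + 1)) :=
        ⟨Submodule.sub_mem _ hx (hLmem y hy), LinearMap.mem_ker.mpr hy0⟩
      have h2 : L y ∈ Submodule.map (L : V →ₗ[ℝ] V) (B (2 * k - 4)) := ⟨y, hy, rfl⟩
      have := Submodule.add_mem_sup h1 h2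
      rwa [sub_add_cancel] at this
end
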